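/- Let ρ, σ be density matrices on ℂ^d, and let ψ and φ be any purifications of ρ and σ respectively. Then the Bures distance satisfies D_B(ρ,σ) ≤ √(2 − 2|⟨ψ,φ⟩|) ≤ ‖ψ − φ‖₂. -/

import Mathlib

open scoped BigOperators ComplexOrder
open Matrix

/-- The eigenvalues of a Hermitian matrix, listed in increasing order
(junk value `0` for non-Hermitian matrices). -/
noncomputable def eigsInc {d : ℕ} (A : Matrix (Fin d) (Fin d) ℂ) : Fin d → ℝ :=
  @dite _ A.IsHermitian (Classical.propDecidable _)
    (fun h => h.eigenvalues ∘ Tuple.sort h.eigenvalues) (fun _ => 0)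

/-- The eigenvalues of a Hermitian matrix, listed in decreasing order. -/
noncomputable def eigsDec {d : ℕ} (A : Matrix (Fin d) (Fin d) ℂ) : Fin d → ℝ :=
  fun k => eigsInc A k.rev

/-- Ergotropy `E(ρ,H) = tr(ρH) - ∑ₖ λₖ Eₖ` with `λ` decreasing, `E` increasing. -/
noncomputable def ergotropy {d : ℕ} (ρ H : Matrix (Fin d) (Fin d) ℂ) : ℝ :=
  ((ρ * H).trace).re - ∑ k : Fin d, eigsDec ρ k * eigsInc H k

/-- Operator norm (ℓ² → ℓ²) of a matrix. -/
noncomputable def opNorm {d : ℕ} (A : Matrix (Fin d) (Fin d) ℂ) : ℝ :=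
  ‖Matrix.toEuclideanCLM (𝕜 := ℂ) A‖

/-- The square root of a positive semidefinite matrix, as `Matrix.PosSemidef.sqrt` was defined
in the older Mathlib (since removed in favour of `CFC.sqrt`). -/
noncomputable def Matrix.PosSemidef.sqrt {n : Type*} [Fintype n] [DecidableEq n]
    {A : Matrix n n ℂ} (hA : A.PosSemidef) : Matrix n n ℂ :=
  hA.1.eigenvectorUnitary.1 * diagonal ((↑) ∘ (Real.sqrt ∘ hA.1.eigenvalues)) *
    (star hA.1.eigenvectorUnitary : Matrix n n ℂ)

/-- Trace norm `‖A‖₁ = tr √(AᴴA)`. -/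
noncomputable def traceNorm {d : ℕ} (A : Matrix (Fin d) (Fin d) ℂ) : ℝ :=
  ((Matrix.posSemidef_conjTranspose_mul_self A).sqrt.trace).re

/-- Trace distance. -/
noncomputable def traceDist {d : ℕ} (ρ σ : Matrix (Fin d) (Fin d) ℂ) : ℝ :=
  traceNorm (ρ - σ) / 2

/-- Positive semidefinite square root (junk value `0` on non-PSD matrices). -/
noncomputable def psdSqrt {d : ℕ} (A : Matrix (Fin d) (Fin d) ℂ) : Matrix (Fin d) (Fin d) ℂ :=
  @dite _ A.PosSemidef (Classical.propDecidable _) (fun h => h.sqrt) (fun _ => 0)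

/-- Uhlmann fidelity `F(ρ,σ) = (tr √(√ρ σ √ρ))²`. -/
noncomputable def fidelity {d : ℕ} (ρ σ : Matrix (Fin d) (Fin d) ℂ) : ℝ :=
  ((psdSqrt (psdSqrt ρ * σ * psdSqrt ρ)).trace).re ^ 2

/-- Bures distance. -/
noncomputable def buresDist {d : ℕ} (ρ σ : Matrix (Fin d) (Fin d) ℂ) : ℝ :=
  Real.sqrt (2 - 2 * Real.sqrt (fidelity ρ σ))

/-- Hilbert–Schmidt distance. -/
noncomputable def hsDist {d : ℕ} (ρ σ : Matrix (Fin d) (Fin d) ℂ) : ℝ :=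
  Real.sqrt ((((ρ - σ)ᴴ * (ρ - σ)).trace).re)

/-- von Neumann entropy `S(ρ) = -tr(ρ ln ρ) = -∑ᵢ λᵢ ln λᵢ`. -/
noncomputable def vnEntropy {d : ℕ} (ρ : Matrix (Fin d) (Fin d) ℂ) : ℝ :=
  -∑ i : Fin d, eigsInc ρ i * Real.log (eigsInc ρ i)

/-- `ψ ∈ ℂᵈ ⊗ ℂᵈ` is a purification of `ρ`. -/
def IsPurification {d : ℕ} (ρ : Matrix (Fin d) (Fin d) ℂ)
    (ψ : EuclideanSpace ℂ (Fin d × Fin d)) : Prop :=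
  ‖ψ‖ = 1 ∧ ∀ i j, ρ i j = ∑ k : Fin d, ψ (i, k) * (starRingEnd ℂ) (ψ (j, k))

/-- Partial trace over the second tensor factor of `|ψ⟩⟨ψ|`. -/
noncomputable def partialTrace {d : ℕ} (ψ : EuclideanSpace ℂ (Fin d × Fin d)) :
    Matrix (Fin d) (Fin d) ℂ :=
  Matrix.of fun i j => ∑ k : Fin d, ψ (i, k) * (starRingEnd ℂ) (ψ (j, k))

/-!
Write the purifications as matrices `X`, `Y`, so that `ρ = X Xᴴ`, `σ = Y Yᴴ` and
`⟪ψ, φ⟫ = tr (Xᴴ Y)`. For every positive definite `M`, the inequality `2 |⟪A, B⟫| ≤ ‖A‖² + ‖B‖²`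
for the Hilbert–Schmidt inner product, applied to `√M X` and `√M⁻¹ Y`, gives
`2 |tr (Xᴴ Y)| ≤ tr (M ρ) + tr (M⁻¹ σ)`. With `P = √ρ`, `S = √(P σ P)` and `M = P⁻¹ S P⁻¹` both
terms equal `tr S = √F(ρ, σ)`. As `P` and `S` may be singular, one takes
`M = (P + ε)⁻¹ (S + δ) (P + ε)⁻¹` instead and lets first `ε → 0`, then `δ → 0`.
The second inequality is `‖ψ - φ‖² = 2 - 2 Re ⟪ψ, φ⟫` for unit vectors.
-/

lemma le_of_forall_pos_le_of_continuous {f : ℝ → ℝ} (hf : Continuous f) {a : ℝ}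
    (h : ∀ ε > 0, a ≤ f ε) : a ≤ f 0 :=
  ge_of_tendsto ((hf.tendsto 0).mono_left (nhdsWithin_le_nhds (s := Set.Ioi 0)))
    (eventually_nhdsWithin_of_forall h)

namespace Matrix

variable {m n : Type*}

lemma two_mul_norm_trace_conjTranspose_mul_le [Fintype m] [Fintype n] (A B : Matrix m n ℂ) :
    2 * ‖(Aᴴ * B).trace‖ ≤ (Aᴴ * A).trace.re + (Bᴴ * B).trace.re := by
  have hsq (C : Matrix m n ℂ) : (Cᴴ * C).trace.re = ∑ i, ∑ k, ‖C k i‖ ^ 2 := by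
    simp only [trace, diag, mul_apply, conjTranspose_apply, RCLike.star_def, Complex.re_sum,
      Complex.conj_mul']
    norm_cast
  have htr : (Aᴴ * B).trace = ∑ i, ∑ k, star (A k i) * B k i := by
    simp only [trace, diag, mul_apply, conjTranspose_apply]
  calc 2 * ‖(Aᴴ * B).trace‖ ≤ 2 * ∑ i, ∑ k, ‖A k i‖ * ‖B k i‖ := by
        rw [htr]
        gcongr
        refine (norm_sum_le _ _).trans (Finset.sum_le_sum fun i _ => (norm_sum_le _ _).trans ?_)
        simp
    _ ≤ ∑ i, ∑ k, (‖A k i‖ ^ 2 + ‖B k i‖ ^ 2) := by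
        simp only [Finset.mul_sum]
        gcongr with i _ k _
        nlinarith [two_mul_le_add_sq ‖A k i‖ ‖B k i‖]
    _ = (Aᴴ * A).trace.re + (Bᴴ * B).trace.re := by
        simp only [hsq, Finset.sum_add_distrib]

variable [DecidableEq n]

lemma PosSemidef.posDef_add_smul_one {A : Matrix n n ℂ} (hA : A.PosSemidef) {ε : ℝ} (hε : 0 < ε) :
    (A + ε • 1).PosDef :=
  PosDef.posSemidef_add hA (PosDef.one.smul hε)

variable [Fintype m] [Fintype n]

lemma PosSemidef.sqrt_mul_self {A : Matrix n n ℂ} (hA : A.PosSemidef) : hA.sqrt * hA.sqrt = A := by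
  set U : Matrix n n ℂ := hA.1.eigenvectorUnitary.1
  have hUU : (star hA.1.eigenvectorUnitary : Matrix n n ℂ) * U = 1 :=
    Unitary.coe_star_mul_self _
  have hD : diagonal ((↑) ∘ (Real.sqrt ∘ hA.1.eigenvalues)) *
      diagonal ((↑) ∘ (Real.sqrt ∘ hA.1.eigenvalues)) =
      diagonal ((↑) ∘ hA.1.eigenvalues : n → ℂ) := by
    rw [diagonal_mul_diagonal]
    congr 1
    funext i
    simp only [Function.comp_apply]
    rw [← Complex.ofReal_mul, Real.mul_self_sqrt (hA.eigenvalues_nonneg i)]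
  have hspec := hA.1.spectral_theorem
  rw [Unitary.conjStarAlgAut_apply] at hspec
  conv_rhs => rw [hspec]
  simp only [PosSemidef.sqrt, Matrix.mul_assoc]
  rw [← Matrix.mul_assoc _ U, hUU, Matrix.one_mul, ← Matrix.mul_assoc _ _ (star _ : Matrix n n ℂ),
    hD]
  rfl

lemma PosSemidef.posSemidef_sqrt {A : Matrix n n ℂ} (hA : A.PosSemidef) : hA.sqrt.PosSemidef := by
  have hD : (diagonal ((↑) ∘ (Real.sqrt ∘ hA.1.eigenvalues)) : Matrix n n ℂ).PosSemidef := by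
    rw [posSemidef_diagonal_iff]
    intro i
    simp only [Function.comp_apply]
    exact_mod_cast Real.sqrt_nonneg _
  simpa [PosSemidef.sqrt, star_eq_conjTranspose] using
    hD.mul_mul_conjTranspose_same hA.1.eigenvectorUnitary.1

lemma PosSemidef.re_trace_mul_nonneg {A B : Matrix n n ℂ} (hA : A.PosSemidef)
    (hB : B.PosSemidef) : 0 ≤ (A * B).trace.re := by
  have hRBR : (hA.sqrt * B * hA.sqrt).PosSemidef := by
    simpa [hA.posSemidef_sqrt.isHermitian.eq] using hB.conjTranspose_mul_mul_same hA.sqrt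
  rw [← hA.sqrt_mul_self, Matrix.mul_assoc, trace_mul_comm, Matrix.mul_assoc]
  simpa [Matrix.mul_assoc] using (Complex.nonneg_iff.mp hRBR.trace_nonneg).1

lemma PosSemidef.re_trace_mul_le {A B : Matrix n n ℂ} (hA : A.PosSemidef)
    (hB : (1 - B).PosSemidef) : (A * B).trace.re ≤ A.trace.re := by
  have := hA.re_trace_mul_nonneg hB
  rw [Matrix.mul_sub, Matrix.mul_one, trace_sub, Complex.sub_re] at this
  linarith

lemma PosDef.two_mul_norm_trace_le {M : Matrix n n ℂ} (hM : M.PosDef) (X Y : Matrix n m ℂ) :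
    2 * ‖(Xᴴ * Y).trace‖ ≤ (M * (X * Xᴴ)).trace.re + (M⁻¹ * (Y * Yᴴ)).trace.re := by
  set R := hM.posSemidef.sqrt
  have hRH : Rᴴ = R := hM.posSemidef.posSemidef_sqrt.isHermitian
  have hRR : R * R = M := hM.posSemidef.sqrt_mul_self
  have hR : IsUnit R.det :=
    (isUnit_iff_isUnit_det R).mp (isUnit_of_mul_isUnit_left (hRR ▸ hM.isUnit))
  have hXY : (R * X)ᴴ * (R⁻¹ * Y) = Xᴴ * Y := by
    rw [conjTranspose_mul, hRH, Matrix.mul_assoc, ← Matrix.mul_assoc R, mul_nonsing_inv _ hR,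
      Matrix.one_mul]
  have hXX : ((R * X)ᴴ * (R * X)).trace = (M * (X * Xᴴ)).trace := by
    rw [conjTranspose_mul, hRH, ← hRR, Matrix.mul_assoc, trace_mul_comm]
    simp only [Matrix.mul_assoc]
  have hYY : ((R⁻¹ * Y)ᴴ * (R⁻¹ * Y)).trace = (M⁻¹ * (Y * Yᴴ)).trace := by
    rw [conjTranspose_mul, conjTranspose_nonsing_inv, hRH, ← hRR, mul_inv_rev, Matrix.mul_assoc,
      trace_mul_comm]
    simp only [Matrix.mul_assoc]
  simpa only [hXY, hXX, hYY] using two_mul_norm_trace_conjTranspose_mul_le (R * X) (R⁻¹ * Y)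

lemma PosSemidef.one_sub_inv_mul_mul_inv {P : Matrix n n ℂ} (hP : P.PosSemidef) {ε : ℝ}
    (hε : 0 < ε) : (1 - (P + ε • 1)⁻¹ * (P * P) * (P + ε • 1)⁻¹).PosSemidef := by
  set Pe := P + ε • (1 : Matrix n n ℂ)
  have hPe : Pe.PosDef := hP.posDef_add_smul_one hε
  have hdet : IsUnit Pe.det := (isUnit_iff_isUnit_det Pe).mp hPe.isUnit
  have hgap : Pe * Pe - P * P = (2 * ε) • P + (ε ^ 2) • 1 := by
    simp only [Pe, add_mul, mul_add, smul_mul_assoc, mul_smul_comm, Matrix.mul_one,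
      Matrix.one_mul]
    module
  have hsub : 1 - Pe⁻¹ * (P * P) * Pe⁻¹ = Pe⁻¹ * (Pe * Pe - P * P) * Pe⁻¹ := by
    have hone : Pe⁻¹ * (Pe * Pe) * Pe⁻¹ = 1 := by
      rw [← Matrix.mul_assoc, nonsing_inv_mul _ hdet, Matrix.one_mul, mul_nonsing_inv _ hdet]
    rw [Matrix.mul_sub, Matrix.sub_mul, hone]
  have hgapPSD : (Pe * Pe - P * P).PosSemidef := by
    rw [hgap]
    exact (hP.smul (by positivity)).add (PosSemidef.one.smul (by positivity))
  rw [hsub]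
  simpa [conjTranspose_nonsing_inv, hPe.isHermitian.eq] using
    hgapPSD.mul_mul_conjTranspose_same Pe⁻¹

lemma PosSemidef.re_trace_inv_add_smul_one_mul_mul_self_le {S : Matrix n n ℂ} (hS : S.PosSemidef)
    {δ : ℝ} (hδ : 0 < δ) : ((S + δ • 1)⁻¹ * (S * S)).trace.re ≤ S.trace.re := by
  set Se := S + δ • (1 : Matrix n n ℂ)
  have hSe : Se.PosDef := hS.posDef_add_smul_one hδ
  have hdet : IsUnit Se.det := (isUnit_iff_isUnit_det Se).mp hSe.isUnit
  have hsub : 1 - Se⁻¹ * S = δ • Se⁻¹ := by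
    calc 1 - Se⁻¹ * S = Se⁻¹ * (Se - S) := by rw [Matrix.mul_sub, nonsing_inv_mul _ hdet]
      _ = δ • Se⁻¹ := by simp [Se]
  rw [← Matrix.mul_assoc, trace_mul_comm]
  exact hS.re_trace_mul_le (hsub ▸ hSe.inv.posSemidef.smul hδ.le)

lemma two_mul_norm_trace_le_of_regularization {P S : Matrix n n ℂ} (hP : P.PosSemidef)
    (hS : S.PosSemidef) {X Y : Matrix n m ℂ} (hPP : P * P = X * Xᴴ) {ε δ : ℝ} (hε : 0 < ε)
    (hδ : 0 < δ) :
    2 * ‖(Xᴴ * Y).trace‖ ≤ S.trace.re + δ * Fintype.card n +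
      ((S + δ • 1)⁻¹ * ((P + ε • 1) * (Y * Yᴴ) * (P + ε • 1))).trace.re := by
  set Pe := P + ε • (1 : Matrix n n ℂ)
  set Se := S + δ • (1 : Matrix n n ℂ)
  have hPe : Pe.PosDef := hP.posDef_add_smul_one hε
  have hSe : Se.PosDef := hS.posDef_add_smul_one hδ
  have hPe' : Pe⁻¹ᴴ = Pe⁻¹ := hPe.inv.isHermitian.eq
  have hM : (Pe⁻¹ * Se * Pe⁻¹).PosDef := by
    simpa only [hPe'] using hSe.mul_mul_conjTranspose_same
      (vecMul_injective_iff_isUnit.mpr hPe.inv.isUnit)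
  have hρ : ((Pe⁻¹ * Se * Pe⁻¹) * (X * Xᴴ)).trace.re ≤ S.trace.re + δ * Fintype.card n := by
    have hcyc : ((Pe⁻¹ * Se * Pe⁻¹) * (X * Xᴴ)).trace = (Se * (Pe⁻¹ * (P * P) * Pe⁻¹)).trace := by
      rw [hPP]
      simp only [Matrix.mul_assoc]
      rw [trace_mul_comm Pe⁻¹]
      simp only [Matrix.mul_assoc]
    rw [hcyc]
    refine (hSe.posSemidef.re_trace_mul_le (hP.one_sub_inv_mul_mul_inv hε)).trans_eq ?_
    simp [Se]
  have hσ : ((Pe⁻¹ * Se * Pe⁻¹)⁻¹ * (Y * Yᴴ)).trace = (Se⁻¹ * (Pe * (Y * Yᴴ) * Pe)).trace := by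
    rw [Matrix.mul_inv_rev, Matrix.mul_inv_rev, nonsing_inv_nonsing_inv _
      ((isUnit_iff_isUnit_det _).mp hPe.isUnit)]
    simp only [Matrix.mul_assoc]
    rw [trace_mul_comm Pe]
    simp only [Matrix.mul_assoc]
  have := hM.two_mul_norm_trace_le X Y
  rw [hσ] at this
  linarith

theorem norm_trace_conjTranspose_mul_le {P S : Matrix n n ℂ} (hP : P.PosSemidef)
    (hS : S.PosSemidef) {X Y : Matrix n m ℂ} (hPP : P * P = X * Xᴴ)
    (hSS : S * S = P * (Y * Yᴴ) * P) : ‖(Xᴴ * Y).trace‖ ≤ S.trace.re := by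
  have hδ : ∀ δ > 0, 2 * ‖(Xᴴ * Y).trace‖ ≤ 2 * S.trace.re + δ * Fintype.card n := by
    intro δ hδ
    have hlim := le_of_forall_pos_le_of_continuous
      (f := fun ε : ℝ => S.trace.re + δ * Fintype.card n +
        ((S + δ • 1)⁻¹ * ((P + ε • 1) * (Y * Yᴴ) * (P + ε • 1))).trace.re) (by fun_prop)
      fun ε hε => two_mul_norm_trace_le_of_regularization hP hS hPP hε hδ
    simp only [zero_smul, add_zero, ← hSS] at hlim
    linarith [hS.re_trace_inv_add_smul_one_mul_mul_self_le hδ]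
  have hlim := le_of_forall_pos_le_of_continuous
    (f := fun δ : ℝ => 2 * S.trace.re + δ * Fintype.card n) (by fun_prop) hδ
  simp only [zero_mul, add_zero] at hlim
  linarith

end Matrix

theorem sqrt_two_sub_two_mul_norm_inner_le_norm_sub {𝕜 E : Type*} [RCLike 𝕜]
    [SeminormedAddCommGroup E] [InnerProductSpace 𝕜 E] {x y : E} (hx : ‖x‖ = 1) (hy : ‖y‖ = 1) :
    √(2 - 2 * ‖inner 𝕜 x y‖) ≤ ‖x - y‖ := by
  rw [← Real.sqrt_sq (norm_nonneg (x - y)), norm_sub_sq (𝕜 := 𝕜), hx, hy]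
  gcongr
  linarith [RCLike.re_le_norm (inner 𝕜 x y)]

def EuclideanSpace.toMatrix {m n : Type*} (ψ : EuclideanSpace ℂ (m × n)) : Matrix m n ℂ :=
  Matrix.of fun i k => ψ (i, k)

lemma EuclideanSpace.inner_eq_trace_toMatrix {m n : Type*} [Fintype m] [Fintype n]
    (ψ φ : EuclideanSpace ℂ (m × n)) : inner ℂ ψ φ = (ψ.toMatrixᴴ * φ.toMatrix).trace := by
  simp only [PiLp.inner_apply, Fintype.sum_prod_type, Matrix.trace, Matrix.diag, Matrix.mul_apply,
    Matrix.conjTranspose_apply, toMatrix, Matrix.of_apply, RCLike.inner_apply]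
  rw [Finset.sum_comm]
  simp only [mul_comm, RCLike.star_def]

lemma IsPurification.eq_toMatrix_mul_conjTranspose {d : ℕ} {ρ : Matrix (Fin d) (Fin d) ℂ}
    {ψ : EuclideanSpace ℂ (Fin d × Fin d)} (h : IsPurification ρ ψ) :
    ρ = ψ.toMatrix * ψ.toMatrixᴴ := by
  ext i j
  simp [h.2 i j, Matrix.mul_apply, EuclideanSpace.toMatrix]

lemma psdSqrt_eq_sqrt {d : ℕ} {A : Matrix (Fin d) (Fin d) ℂ} (hA : A.PosSemidef) :
    psdSqrt A = hA.sqrt :=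
  dif_pos hA

lemma sqrt_fidelity_eq_re_trace_sqrt {d : ℕ} {ρ σ : Matrix (Fin d) (Fin d) ℂ}
    (hρ : ρ.PosSemidef) (hT : (hρ.sqrt * σ * hρ.sqrt).PosSemidef) :
    √(fidelity ρ σ) = hT.sqrt.trace.re := by
  rw [fidelity, psdSqrt_eq_sqrt hρ, psdSqrt_eq_sqrt hT,
    Real.sqrt_sq (Complex.nonneg_iff.mp hT.posSemidef_sqrt.trace_nonneg).1]

theorem buresDist_le_purification_dist_general {d : ℕ} (ρ σ : Matrix (Fin d) (Fin d) ℂ)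
    (hρ : ρ.PosSemidef)
    (hσ : σ.PosSemidef)
    (ψ φ : EuclideanSpace ℂ (Fin d × Fin d))
    (hψ : IsPurification ρ ψ) (hφ : IsPurification σ φ) :
    buresDist ρ σ ≤ Real.sqrt (2 - 2 * ‖(inner ℂ ψ φ : ℂ)‖) ∧
      Real.sqrt (2 - 2 * ‖(inner ℂ ψ φ : ℂ)‖) ≤ ‖ψ - φ‖ := by
  have hT : (hρ.sqrt * σ * hρ.sqrt).PosSemidef := by
    have h := hσ.mul_mul_conjTranspose_same hρ.sqrt
    rwa [hρ.posSemidef_sqrt.isHermitian.eq] at h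
  have hUhlmann : ‖inner ℂ ψ φ‖ ≤ hT.sqrt.trace.re := by
    rw [EuclideanSpace.inner_eq_trace_toMatrix]
    refine Matrix.norm_trace_conjTranspose_mul_le hρ.posSemidef_sqrt hT.posSemidef_sqrt ?_ ?_
    · rw [hρ.sqrt_mul_self, ← hψ.eq_toMatrix_mul_conjTranspose]
    · rw [hT.sqrt_mul_self, ← hφ.eq_toMatrix_mul_conjTranspose]
  refine ⟨Real.sqrt_le_sqrt ?_, sqrt_two_sub_two_mul_norm_inner_le_norm_sub hψ.1 hφ.1⟩
  rw [sqrt_fidelity_eq_re_trace_sqrt hρ hT]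
  linarith

/-- The Bures distance is bounded by the Euclidean distance between
any purifications: `D_B(ρ,σ) ≤ √(2 − 2|⟨ψ,φ⟩|) ≤ ‖ψ − φ‖₂`. -/
theorem buresDist_le_purification_dist {d : ℕ} (ρ σ : Matrix (Fin d) (Fin d) ℂ)
    (hρ : ρ.PosSemidef) (hρ1 : ρ.trace = 1)
    (hσ : σ.PosSemidef) (hσ1 : σ.trace = 1)
    (ψ φ : EuclideanSpace ℂ (Fin d × Fin d))
    (hψ : IsPurification ρ ψ) (hφ : IsPurification σ φ) :
    buresDist ρ σ ≤ Real.sqrt (2 - 2 * ‖(inner ℂ ψ φ : ℂ)‖) ∧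
      Real.sqrt (2 - 2 * ‖(inner ℂ ψ φ : ℂ)‖) ≤ ‖ψ - φ‖ :=
  buresDist_le_purification_dist_general ρ σ hρ hσ ψ φ hψ hφ
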